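/- Let P be a ν-partition of G and let ψ be a non-degenerate eigenvector of L^{∂P} whose eigenvalue λ_n is the n-th smallest eigenvalue of L^{∂P} and whose nodal set with respect to σ^{∂P} equals ∂P (equivalently, ψ_i ψ_j > 0 for every edge (i,j) ∈ E). Define α̃ ∈ ℝ^{∂P} by α̃_ij = ψ_j/ψ_i for each oriented boundary edge (i,j); then every α̃_ij > 0, and for each k = 1,…,ν the restriction of ψ to V_k is an eigenvector of the block L^{∂P}(G_k, α̃) with eigenvalue λ_n, this eigenvalue is the smallest eigenvalue λ_1(G_k, α̃) of the block, and hence (P, α̃) is an equipartition with Λ(P, α̃) = λ_n. -/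

import Mathlib

/-!
With `α̃_ij = ψ_j / ψ_i`, every `B_ij(α̃_ij)` annihilates `ψ`, so `ψ` is still an eigenvector
of `L^{∂P}(P, α̃)` with eigenvalue `λ_n`; moreover the `B_ij` exactly cancel the boundary entries
of `L^{∂P}`, so this matrix is block diagonal and `ψ` restricts to an eigenvector of each block.
On a block all off-diagonal entries are `-w_ij ≤ 0` while `ψ_i ψ_j > 0`, and the ground state
transform `x = ψ y` gives `⟨x, (A - λ) x⟩ = ½ ∑ w_ij ψ_i ψ_j (y_i - y_j)² ≥ 0`: an eigenvector
without sign changes belongs to the smallest eigenvalue.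
-/

open Matrix Finset

noncomputable section

variable {V : Type*}

/-- The signed Laplacian of the weighted graph `(G,w)` with signature `σ`. -/
def signedLaplacian [Fintype V] [DecidableEq V] (G : SimpleGraph V) [DecidableRel G.Adj]
    (w σ : V → V → ℝ) : Matrix V V ℝ :=
  Matrix.of fun i j =>
    if i = j then ∑ k, if G.Adj i k then w i k else 0
    else if G.Adj i j then -(σ i j * w i j) else 0

/-- The `n`-th smallest eigenvalue (1-based, counted with multiplicity) of a real
symmetric matrix; junk value `0` if the matrix is not Hermitian or `n` is out of range. -/
def nthEigenvalue [Fintype V] [DecidableEq V] (A : Matrix V V ℝ) (n : ℕ) : ℝ :=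
  if h : A.IsHermitian ∧ n - 1 < Fintype.card V then
    let f : Fin (Fintype.card V) → ℝ := fun i => h.1.eigenvalues ((Fintype.equivFin V).symm i)
    f (Tuple.sort f ⟨n - 1, h.2⟩)
  else 0

/-- `μ` is a simple eigenvalue of `A`: its eigenspace is one-dimensional. -/
def IsSimpleEigenvalue [Fintype V] [DecidableEq V] (A : Matrix V V ℝ) (μ : ℝ) : Prop :=
  Module.finrank ℝ (Module.End.eigenspace (Matrix.toLin' A) μ) = 1

/-- The nodal set of `u` with respect to the signature `σ`, as a set of (unordered) edges. -/
def nodalEdges (G : SimpleGraph V) (σ : V → V → ℝ) (u : V → ℝ) : Set (Sym2 V) :=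
  {e | ∃ i j, e = s(i, j) ∧ G.Adj i j ∧ u i * σ i j * u j < 0}

/-- The number of nodal domains of `u` on `(G,σ)`: the number of connected components
of the spanning subgraph obtained by deleting the nodal set. -/
def nodalCount (G : SimpleGraph V) (σ : V → V → ℝ) (u : V → ℝ) : ℕ :=
  Nat.card (G.deleteEdges (nodalEdges G σ u)).ConnectedComponent

/-- `(G,σ)` is balanced: every cycle has positive sign. -/
def IsBalanced (G : SimpleGraph V) (σ : V → V → ℝ) : Prop :=
  ∀ ⦃v : V⦄ (p : G.Walk v v), p.IsCycle →
    0 < (p.darts.map fun d => σ d.toProd.1 d.toProd.2).prod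

/-- The matrix `B_{ij}(a)`. -/
def Bmat [DecidableEq V] (i j : V) (a : ℝ) : Matrix V V ℝ :=
  Matrix.of fun x y =>
    if x = i ∧ y = i then a
    else if x = j ∧ y = j then a⁻¹
    else if (x = i ∧ y = j) ∨ (x = j ∧ y = i) then -1
    else 0

/-- The signature `σ^{∂P}` determined by the partition `P`. -/
def partSgn {ν : ℕ} (P : V → Fin ν) (i j : V) : ℝ :=
  if P i = P j then 1 else -1

/-- `L^{∂P}(P,α)`: the partition Laplacian perturbed by the rank-one parameter matrices
on the oriented boundary edges `O`. -/
def paramMatrix [Fintype V] [DecidableEq V] (G : SimpleGraph V) [DecidableRel G.Adj]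
    (w : V → V → ℝ) {ν : ℕ} (P : V → Fin ν) (O : Finset (V × V)) (α : V × V → ℝ) :
    Matrix V V ℝ :=
  signedLaplacian G w (partSgn P) + ∑ p ∈ O, w p.1 p.2 • Bmat p.1 p.2 (α p)

/-- The principal submatrix of `M` on the `k`-th part of the partition `P`. -/
def blockMatrix {ν : ℕ} (M : Matrix V V ℝ) (P : V → Fin ν) (k : Fin ν) :
    Matrix {v : V // P v = k} {v : V // P v = k} ℝ :=
  M.submatrix Subtype.val Subtype.val

/-- `λ₁(G_k, α)`: the smallest eigenvalue of the block of `L^{∂P}(P,α)` on part `k`. -/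
def lam1Block [Fintype V] [DecidableEq V] {ν : ℕ} (M : Matrix V V ℝ) (P : V → Fin ν)
    (k : Fin ν) : ℝ :=
  nthEigenvalue (blockMatrix M P k) 1

/-- The partition energy `Λ(P, α) = max_k λ₁(G_k, α)`. -/
def PartitionEnergy [Fintype V] [DecidableEq V] (G : SimpleGraph V) [DecidableRel G.Adj]
    (w : V → V → ℝ) {ν : ℕ} (P : V → Fin ν) (O : Finset (V × V)) (α : V × V → ℝ) : ℝ :=
  ⨆ k : Fin ν, lam1Block (paramMatrix G w P O α) P k

/-- `(P, α)` is an equipartition: all the first block eigenvalues agree. -/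
def IsEquipartition [Fintype V] [DecidableEq V] (G : SimpleGraph V) [DecidableRel G.Adj]
    (w : V → V → ℝ) {ν : ℕ} (P : V → Fin ν) (O : Finset (V × V)) (α : V × V → ℝ) : Prop :=
  ∀ k l : Fin ν, lam1Block (paramMatrix G w P O α) P k = lam1Block (paramMatrix G w P O α) P l

section GroundState

variable {W : Type*} [Fintype W]

theorem dotProduct_mulVec_nonneg_of_mulVec_eq_zero {C : Matrix W W ℝ} (hC : C.IsSymm)
    {ψ : W → ℝ} (hψ : ∀ i, ψ i ≠ 0) (hker : C *ᵥ ψ = 0)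
    (hoff : ∀ i j, i ≠ j → C i j * (ψ i * ψ j) ≤ 0) (x : W → ℝ) :
    0 ≤ x ⬝ᵥ C *ᵥ x := by
  have hsum : ∀ a b : W → ℝ, a ⬝ᵥ C *ᵥ b = ∑ i, ∑ j, a i * C i j * b j := by
    intro a b
    simp only [dotProduct, mulVec, Finset.mul_sum, mul_assoc]
  set y : W → ℝ := fun i => x i ^ 2 / ψ i
  have hyψ : y ⬝ᵥ C *ᵥ ψ = 0 := by rw [hker, dotProduct_zero]
  have hψy : ψ ⬝ᵥ C *ᵥ y = 0 := by
    rw [dotProduct_mulVec, ← mulVec_transpose, hC.eq, hker, zero_dotProduct]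
  have htransform : 2 * (x ⬝ᵥ C *ᵥ x) - y ⬝ᵥ C *ᵥ ψ - ψ ⬝ᵥ C *ᵥ y =
      ∑ i, ∑ j, -(C i j * (ψ i * ψ j)) * (x i / ψ i - x j / ψ j) ^ 2 := by
    simp only [hsum, y, Finset.mul_sum, ← Finset.sum_sub_distrib]
    refine Finset.sum_congr rfl fun i _ => Finset.sum_congr rfl fun j _ => ?_
    have := hψ i
    have := hψ j
    field_simp
    ring
  have hnonneg : 0 ≤ ∑ i, ∑ j, -(C i j * (ψ i * ψ j)) * (x i / ψ i - x j / ψ j) ^ 2 := by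
    refine Finset.sum_nonneg fun i _ => Finset.sum_nonneg fun j _ => ?_
    rcases eq_or_ne i j with rfl | hij
    · simp
    · exact mul_nonneg (neg_nonneg.mpr (hoff i j hij)) (sq_nonneg _)
  linarith

theorem mul_dotProduct_le_of_mulVec_eq_smul {A : Matrix W W ℝ} [DecidableEq W] (hA : A.IsSymm)
    {ψ : W → ℝ} {μ : ℝ} (hψ : ∀ i, ψ i ≠ 0) (heig : A *ᵥ ψ = μ • ψ)
    (hoff : ∀ i j, i ≠ j → A i j * (ψ i * ψ j) ≤ 0) (x : W → ℝ) :
    μ * (x ⬝ᵥ x) ≤ x ⬝ᵥ A *ᵥ x := by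
  have hC : (A - μ • 1).IsSymm := hA.sub (isSymm_one.smul μ)
  have hker : (A - μ • 1) *ᵥ ψ = 0 := by
    rw [sub_mulVec, smul_mulVec, one_mulVec, heig, sub_self]
  have hoffC : ∀ i j, i ≠ j → (A - μ • 1) i j * (ψ i * ψ j) ≤ 0 := by
    intro i j hij
    simpa [one_apply_ne hij] using hoff i j hij
  have := dotProduct_mulVec_nonneg_of_mulVec_eq_zero hC hψ hker hoffC x
  rw [sub_mulVec, smul_mulVec, one_mulVec, dotProduct_sub, dotProduct_smul, smul_eq_mul] at this
  linarith

theorem nthEigenvalue_one_eq_of_isLeast [DecidableEq W] [Nonempty W] {A : Matrix W W ℝ}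
    (hA : A.IsHermitian) {μ : ℝ} (hμ : IsLeast (Set.range hA.eigenvalues) μ) :
    nthEigenvalue A 1 = μ := by
  have hcard : 1 - 1 < Fintype.card W := by simpa using Fintype.card_pos
  rw [nthEigenvalue, dif_pos ⟨hA, hcard⟩]
  set f : Fin (Fintype.card W) → ℝ := fun i => hA.eigenvalues ((Fintype.equivFin W).symm i)
  obtain ⟨⟨j, rfl⟩, hlow⟩ := hμ
  refine le_antisymm ?_ (hlow ⟨_, rfl⟩)
  have hj : hA.eigenvalues j = f (Tuple.sort f ((Tuple.sort f).symm (Fintype.equivFin W j))) := by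
    simp [f]
  exact hj ▸ Tuple.monotone_sort f (Fin.zero_le _)

theorem nthEigenvalue_one_eq_of_mulVec_eq_smul [DecidableEq W] [Nonempty W] {A : Matrix W W ℝ}
    (hA : A.IsSymm) {ψ : W → ℝ} {μ : ℝ} (hψ : ∀ i, ψ i ≠ 0) (heig : A *ᵥ ψ = μ • ψ)
    (hoff : ∀ i j, i ≠ j → A i j * (ψ i * ψ j) ≤ 0) :
    nthEigenvalue A 1 = μ := by
  have hH : A.IsHermitian := isHermitian_iff_isSymm.mpr hA
  refine nthEigenvalue_one_eq_of_isLeast hH ⟨?_, ?_⟩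
  · have hvec : Module.End.HasEigenvector (toLin' A) μ ψ :=
      Module.End.hasEigenvector_iff.mpr
        ⟨Module.End.mem_eigenspace_iff.mpr (by rwa [toLin'_apply]),
          fun h => hψ (Classical.arbitrary W) (congrFun h _)⟩
    have hspec : μ ∈ spectrum ℝ A :=
      spectrum_toLin' A ▸ (Module.End.hasEigenvalue_of_hasEigenvector hvec).mem_spectrum
    rwa [hH.spectrum_real_eq_range_eigenvalues] at hspec
  · rintro _ ⟨j, rfl⟩
    set v : W → ℝ := ⇑(hH.eigenvectorBasis j)
    have hv : 0 < v ⬝ᵥ v := by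
      have hv0 : v ≠ 0 := fun h =>
        hH.eigenvectorBasis.orthonormal.ne_zero j (WithLp.ofLp_injective 2 h)
      simpa using dotProduct_star_self_pos_iff.mpr hv0
    have hray := mul_dotProduct_le_of_mulVec_eq_smul hA hψ heig hoff v
    rw [hH.mulVec_eigenvectorBasis j, dotProduct_smul, smul_eq_mul] at hray
    exact le_of_mul_le_mul_right hray hv

end GroundState

theorem partSgn_comm {ν : ℕ} (P : V → Fin ν) (i j : V) : partSgn P i j = partSgn P j i := by
  simp only [partSgn, eq_comm]

section PartitionLaplacian

variable [DecidableEq V]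

theorem Bmat_apply_of_ne {i j x y : V} (a : ℝ) (hxy : x ≠ y) :
    Bmat i j a x y = -((if (i, j) = (x, y) then 1 else 0) + if (i, j) = (y, x) then 1 else 0) := by
  simp only [Bmat, of_apply, Prod.mk.injEq]
  by_cases hx : x = i <;> by_cases hy : y = j <;> by_cases hx' : x = j <;> by_cases hy' : y = i <;>
    simp_all [eq_comm]

theorem Bmat_mulVec_eq_zero [Fintype V] {i j : V} (hij : i ≠ j) {ψ : V → ℝ} (hi : ψ i ≠ 0)
    (hj : ψ j ≠ 0) : Bmat i j (ψ j / ψ i) *ᵥ ψ = 0 := by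
  ext x
  rw [mulVec, dotProduct, ← Finset.sum_subset (Finset.subset_univ {i, j}), Finset.sum_pair hij]
  · by_cases hxi : x = i
    · simp [hxi, Bmat, hij, hij.symm, div_mul_cancel₀ _ hi]
    · by_cases hxj : x = j
      · simp [hxj, Bmat, hij, hij.symm, div_mul_cancel₀ _ hj]
      · simp [Bmat, hxi, hxj]
  · intro y _ hy
    simp only [Finset.mem_insert, Finset.mem_singleton, not_or] at hy
    simp [Bmat, hy.1, hy.2]

theorem sum_smul_Bmat_apply_of_ne (O : Finset (V × V)) (c α : V × V → ℝ) {x y : V}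
    (hxy : x ≠ y) :
    (∑ p ∈ O, c p • Bmat p.1 p.2 (α p)) x y =
      -((if (x, y) ∈ O then c (x, y) else 0) + if (y, x) ∈ O then c (y, x) else 0) := by
  simp only [Matrix.sum_apply, Matrix.smul_apply, Prod.mk.eta, Bmat_apply_of_ne _ hxy,
    smul_eq_mul, mul_neg, mul_add, mul_ite, mul_one, mul_zero, Finset.sum_neg_distrib,
    Finset.sum_add_distrib, Finset.sum_ite_eq']

variable [Fintype V] {G : SimpleGraph V} [DecidableRel G.Adj] {w : V → V → ℝ} {ν : ℕ}
  {P : V → Fin ν} {O : Finset (V × V)} {α : V × V → ℝ}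

theorem paramMatrix_apply_of_ne {x y : V} (hxy : x ≠ y) :
    paramMatrix G w P O α x y = (if G.Adj x y then -(partSgn P x y * w x y) else 0) -
      ((if (x, y) ∈ O then w x y else 0) + if (y, x) ∈ O then w y x else 0) := by
  rw [paramMatrix, Matrix.add_apply, sum_smul_Bmat_apply_of_ne O (fun p => w p.1 p.2) α hxy]
  simp [signedLaplacian, hxy, sub_eq_add_neg]

theorem paramMatrix_isSymm (hw : ∀ i j, w i j = w j i) : (paramMatrix G w P O α).IsSymm := by
  refine IsSymm.ext fun x y => ?_
  rcases eq_or_ne x y with rfl | hxy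
  · rfl
  · simp only [paramMatrix_apply_of_ne hxy, paramMatrix_apply_of_ne hxy.symm, G.adj_comm,
      partSgn_comm P y, hw y x]
    ring

theorem paramMatrix_apply_eq_zero_of_ne (hw : ∀ i j, w i j = w j i)
    (hO : ∀ p ∈ O, G.Adj p.1 p.2 ∧ P p.1 ≠ P p.2)
    (hOorient : ∀ i j, G.Adj i j → P i ≠ P j → ((i, j) ∈ O ↔ (j, i) ∉ O))
    {x y : V} (hP : P x ≠ P y) : paramMatrix G w P O α x y = 0 := by
  rw [paramMatrix_apply_of_ne (ne_of_apply_ne P hP)]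
  by_cases hadj : G.Adj x y
  · have horient := hOorient x y hadj hP
    by_cases hxy : (x, y) ∈ O
    · simp [partSgn, hP, hadj, hxy, horient.mp hxy]
    · simp [partSgn, hP, hadj, hxy, not_not.mp (mt horient.mpr hxy), hw y x]
  · have hxy : (x, y) ∉ O := fun h => hadj (hO _ h).1
    have hyx : (y, x) ∉ O := fun h => hadj (hO _ h).1.symm
    simp [hadj, hxy, hyx]

theorem paramMatrix_apply_of_eq (hO : ∀ p ∈ O, P p.1 ≠ P p.2) {x y : V} (hxy : x ≠ y)
    (hP : P x = P y) : paramMatrix G w P O α x y = if G.Adj x y then -w x y else 0 := by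
  have hxyO : (x, y) ∉ O := fun h => hO _ h hP
  have hyxO : (y, x) ∉ O := fun h => hO _ h hP.symm
  simp [paramMatrix_apply_of_ne hxy, partSgn, hP, hxyO, hyxO]

theorem paramMatrix_apply_mul_nonpos (hO : ∀ p ∈ O, P p.1 ≠ P p.2)
    (hwpos : ∀ i j, G.Adj i j → 0 < w i j) {ψ : V → ℝ} (hψ : ∀ i j, G.Adj i j → 0 < ψ i * ψ j)
    {x y : V} (hxy : x ≠ y) (hP : P x = P y) : paramMatrix G w P O α x y * (ψ x * ψ y) ≤ 0 := by
  rw [paramMatrix_apply_of_eq hO hxy hP]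
  split_ifs with hadj
  · exact mul_nonpos_of_nonpos_of_nonneg (neg_nonpos.mpr (hwpos x y hadj).le) (hψ x y hadj).le
  · rw [zero_mul]

theorem paramMatrix_mulVec_self (hO : ∀ p ∈ O, p.1 ≠ p.2) {ψ : V → ℝ} (hψ : ∀ v, ψ v ≠ 0) :
    paramMatrix G w P O (fun p => ψ p.2 / ψ p.1) *ᵥ ψ = signedLaplacian G w (partSgn P) *ᵥ ψ := by
  rw [paramMatrix, add_mulVec, sum_mulVec, Finset.sum_eq_zero, add_zero]
  intro p hp
  rw [smul_mulVec, Bmat_mulVec_eq_zero (hO p hp) (hψ _) (hψ _), smul_zero]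

end PartitionLaplacian

theorem blockMatrix_mulVec_of_apply_eq_zero [Fintype V] {ν : ℕ} {M : Matrix V V ℝ}
    {P : V → Fin ν} (hM : ∀ x y, P x ≠ P y → M x y = 0) (ψ : V → ℝ) (k : Fin ν) :
    blockMatrix M P k *ᵥ (fun v => ψ v.1) = fun v => (M *ᵥ ψ) v.1 := by
  ext v
  simp only [mulVec, dotProduct, blockMatrix, submatrix_apply]
  have houtside : ∑ u : {u // ¬P u = k}, M v u * ψ u = 0 :=
    Fintype.sum_eq_zero _ fun u => by rw [hM v u fun h => u.2 (h.symm.trans v.2), zero_mul]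
  rw [← Fintype.sum_subtype_add_sum_subtype (fun u => P u = k), houtside, add_zero]

theorem stmt8_general [Fintype V] [DecidableEq V] (G : SimpleGraph V) [DecidableRel G.Adj]
    (hGconn : G.Connected) (w : V → V → ℝ)
    (hwsymm : ∀ i j, w i j = w j i) (hwpos : ∀ i j, G.Adj i j → 0 < w i j)
    {ν : ℕ} (P : V → Fin ν) (hPsurj : Function.Surjective P)
    (O : Finset (V × V))
    (hO : ∀ p ∈ O, G.Adj p.1 p.2 ∧ P p.1 ≠ P p.2)
    (hOorient : ∀ i j, G.Adj i j → P i ≠ P j → ((i, j) ∈ O ↔ (j, i) ∉ O))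
    (ψ : V → ℝ) (lam : ℝ)
    (heig : (signedLaplacian G w (partSgn P)).mulVec ψ = lam • ψ)
    (hψnz : ∀ v, ψ v ≠ 0)
    (hnodal : ∀ i j, G.Adj i j → 0 < ψ i * ψ j) :
    (∀ p ∈ O, 0 < ψ p.2 / ψ p.1) ∧
    (∀ k : Fin ν,
      (blockMatrix (paramMatrix G w P O fun p => ψ p.2 / ψ p.1) P k).mulVec
          (fun v => ψ v.1) = lam • (fun v : {v : V // P v = k} => ψ v.1) ∧
      lam1Block (paramMatrix G w P O fun p => ψ p.2 / ψ p.1) P k = lam) ∧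
    IsEquipartition G w P O (fun p => ψ p.2 / ψ p.1) ∧
    PartitionEnergy G w P O (fun p => ψ p.2 / ψ p.1) = lam := by
  set M := paramMatrix G w P O fun p => ψ p.2 / ψ p.1
  have heigM : M *ᵥ ψ = lam • ψ :=
    (paramMatrix_mulVec_self (fun p hp => (hO p hp).1.ne) hψnz).trans heig
  have hblock (k : Fin ν) :
      blockMatrix M P k *ᵥ (fun v => ψ v.1) = lam • fun v : {v : V // P v = k} => ψ v.1 := by
    rw [blockMatrix_mulVec_of_apply_eq_zero
      (fun x y => paramMatrix_apply_eq_zero_of_ne hwsymm hO hOorient) ψ k, heigM]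
    rfl
  have hlam1 (k : Fin ν) : lam1Block M P k = lam := by
    obtain ⟨v, hv⟩ := hPsurj k
    have : Nonempty {v : V // P v = k} := ⟨⟨v, hv⟩⟩
    refine nthEigenvalue_one_eq_of_mulVec_eq_smul ((paramMatrix_isSymm hwsymm).submatrix _)
      (fun v => hψnz v) (hblock k) fun x y hxy => ?_
    exact paramMatrix_apply_mul_nonpos (fun p hp => (hO p hp).2) hwpos hnodal
      (Subtype.coe_ne_coe.mpr hxy) (x.2.trans y.2.symm)
  have : Nonempty (Fin ν) := ⟨P hGconn.nonempty.some⟩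
  refine ⟨fun p hp => ?_, fun k => ⟨hblock k, hlam1 k⟩,
    fun k l => (hlam1 k).trans (hlam1 l).symm, ?_⟩
  · exact div_pos_iff.mpr (mul_pos_iff.mp (hnodal p.2 p.1 (hO p hp).1.symm))
  · exact (iSup_congr hlam1).trans ciSup_const

/-- A non-degenerate eigenvector `ψ` of `L^{∂P}` whose nodal set is `∂P`
(equivalently `ψ_i ψ_j > 0` on every edge) induces, via `α̃_ij = ψ_j/ψ_i > 0`, an
equipartition `(P, α̃)` whose blocks all have `ψ` restricted as ground state with first
eigenvalue `λ_n`, so that `Λ(P, α̃) = λ_n`. -/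
theorem stmt8 [Fintype V] [DecidableEq V] (G : SimpleGraph V) [DecidableRel G.Adj]
    (hGconn : G.Connected) (w : V → V → ℝ)
    (hwsymm : ∀ i j, w i j = w j i) (hwpos : ∀ i j, G.Adj i j → 0 < w i j)
    (hw0 : ∀ i j, ¬ G.Adj i j → w i j = 0)
    {ν : ℕ} (P : V → Fin ν) (hPsurj : Function.Surjective P)
    (hPconn : ∀ k : Fin ν, (G.induce {v | P v = k}).Connected)
    (O : Finset (V × V))
    (hO : ∀ p ∈ O, G.Adj p.1 p.2 ∧ P p.1 ≠ P p.2)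
    (hOorient : ∀ i j, G.Adj i j → P i ≠ P j → ((i, j) ∈ O ↔ (j, i) ∉ O))
    (ψ : V → ℝ) (lam : ℝ) (n : ℕ) (hn1 : 1 ≤ n) (hn2 : n ≤ Fintype.card V)
    (heig : (signedLaplacian G w (partSgn P)).mulVec ψ = lam • ψ)
    (hψnz : ∀ v, ψ v ≠ 0)
    (hsimple : IsSimpleEigenvalue (signedLaplacian G w (partSgn P)) lam)
    (hlam : lam = nthEigenvalue (signedLaplacian G w (partSgn P)) n)
    (hnodal : ∀ i j, G.Adj i j → 0 < ψ i * ψ j) :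
    (∀ p ∈ O, 0 < ψ p.2 / ψ p.1) ∧
    (∀ k : Fin ν,
      (blockMatrix (paramMatrix G w P O fun p => ψ p.2 / ψ p.1) P k).mulVec
          (fun v => ψ v.1) = lam • (fun v : {v : V // P v = k} => ψ v.1) ∧
      lam1Block (paramMatrix G w P O fun p => ψ p.2 / ψ p.1) P k = lam) ∧
    IsEquipartition G w P O (fun p => ψ p.2 / ψ p.1) ∧
    PartitionEnergy G w P O (fun p => ψ p.2 / ψ p.1) = lam :=
  stmt8_general G hGconn w hwsymm hwpos P hPsurj O hO hOorient ψ lam heig hψnz hnodal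

end
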